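/- Let P be a finite poset, k a field, and Q a full subposet of P with inclusion ι : Q ↪ P. Then the composite functor Res ∘ Θ, from persistence modules over Q to persistence modules over Q, is naturally isomorphic to the identity functor. -/

import Mathlib

open CategoryTheory CategoryTheory.Limits

attribute [local instance] CategoryTheory.Limits.HasFiniteBiproducts.of_hasFiniteProducts

section Posets

variable {P : Type} [PartialOrder P]

/-- Zigzag connectivity of two elements of a subset `S` of a poset: they are linked by a
zigzag of comparable pairs inside `S`. -/
def ZigzagConnIn (S : Set P) (a b : S) : Prop :=
  Relation.ReflTransGen (fun u v : S => (u : P) ≤ v ∨ (v : P) ≤ u) a b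

/-- A subset of a poset is convex if `x ≤ z ≤ y` with `x, y` in the subset implies `z` is. -/
def IsConvex (S : Set P) : Prop :=
  ∀ ⦃x y z : P⦄, x ∈ S → y ∈ S → x ≤ z → z ≤ y → z ∈ S

/-- An interval of a poset: a nonempty, convex, zigzag-connected subset. -/
def IsIntervalSet (S : Set P) : Prop :=
  S.Nonempty ∧ IsConvex S ∧ ∀ a b : S, ZigzagConnIn S a b

end Posets

section IntervalModules

variable (k : Type) [Field k] {P : Type} [PartialOrder P]

open Classical in
/-- The linear map between the fibers of the interval module. -/
noncomputable def intervalModuleAux (S : Set P) (p q : P) :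
    ↥(if p ∈ S then (⊤ : Submodule k k) else ⊥) →ₗ[k]
      ↥(if q ∈ S then (⊤ : Submodule k k) else ⊥) where
  toFun x := ⟨(if p ∈ S ∧ q ∈ S then (1 : k) else 0) * x.1, by
    by_cases hq : q ∈ S
    · rw [if_pos hq]; exact Submodule.mem_top
    · rw [if_neg hq, if_neg (fun h => hq h.2), zero_mul]; exact Submodule.zero_mem _⟩
  map_add' x y := by ext; simp [mul_add]
  map_smul' c x := by ext; simp

open Classical in
/-- The interval module `k_S` associated to a convex subset `S` of a poset `P`:
it is `k` at points of `S`, `0` elsewhere, with identity structure maps inside `S`. -/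
noncomputable def intervalModule (S : Set P) (hS : IsConvex S) : P ⥤ ModuleCat.{0} k where
  obj p := ModuleCat.of k ↥(if p ∈ S then (⊤ : Submodule k k) else ⊥)
  map {p q} _ := ModuleCat.ofHom (intervalModuleAux k S p q)
  map_id p := by
    apply ModuleCat.hom_ext
    apply LinearMap.ext
    rintro ⟨x, hx⟩
    apply Subtype.ext
    show (if p ∈ S ∧ p ∈ S then (1 : k) else 0) * x = x
    by_cases hp : p ∈ S
    · simp [hp]
    · rw [if_neg hp] at hx
      simp [hp, (Submodule.mem_bot k).mp hx]
  map_comp {p q r} f g := by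
    apply ModuleCat.hom_ext
    apply LinearMap.ext
    rintro ⟨x, hx⟩
    apply Subtype.ext
    show (if p ∈ S ∧ r ∈ S then (1 : k) else 0) * x
      = (if q ∈ S ∧ r ∈ S then (1 : k) else 0) * ((if p ∈ S ∧ q ∈ S then (1 : k) else 0) * x)
    by_cases hp : p ∈ S
    · by_cases hr : r ∈ S
      · have hq : q ∈ S := hS hp hr (leOfHom f) (leOfHom g)
        simp [hp, hq, hr]
      · simp [hr]
    · rw [if_neg hp] at hx
      simp [(Submodule.mem_bot k).mp hx]

/-- A persistence module is an interval module if it is isomorphic to `k_S` for some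
interval `S`. -/
def IsIntervalModule (M : P ⥤ ModuleCat.{0} k) : Prop :=
  ∃ (S : Set P) (hS : IsIntervalSet S), Nonempty (M ≅ intervalModule k S hS.2.1)

/-- A persistence module is interval-decomposable if it is isomorphic to a finite direct sum
of interval modules. -/
def IsIntervalDecomposable (M : P ⥤ ModuleCat.{0} k) : Prop :=
  ∃ (n : ℕ) (J : Fin n → (P ⥤ ModuleCat.{0} k)),
    (∀ i, IsIntervalModule k (J i)) ∧ Nonempty (M ≅ ⨁ J)

/-- The support of a persistence module. -/
def moduleSupport (M : P ⥤ ModuleCat.{0} k) : Set P := {p : P | ¬ IsZero (M.obj p)}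

/-- A persistence module valued in finite-dimensional vector spaces. -/
def PointwiseFinite (M : P ⥤ ModuleCat.{0} k) : Prop :=
  ∀ p : P, FiniteDimensional k (M.obj p)

end IntervalModules

section Approximations

variable {C : Type*} [Category C]

/-- `f : X ⟶ M` is a right `𝒳`-approximation of `M` if `X ∈ 𝒳` and every morphism
from an object of `𝒳` to `M` factors through `f`. -/
def IsRightApproximation (𝒳 : C → Prop) {X M : C} (f : X ⟶ M) : Prop :=
  𝒳 X ∧ ∀ ⦃Y : C⦄ (g : Y ⟶ M), 𝒳 Y → ∃ h : Y ⟶ X, h ≫ f = g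

/-- `f : X ⟶ M` is right minimal if every endomorphism `g` of `X` with `f ∘ g = f`
is an isomorphism. -/
def IsRightMinimal {X M : C} (f : X ⟶ M) : Prop :=
  ∀ g : X ⟶ X, g ≫ f = f → IsIso g

end Approximations

/-- An interval cover: a right minimal approximation by interval-decomposable modules. -/
def IsIntervalCover (k : Type) [Field k] {P : Type} [PartialOrder P]
    {X M : P ⥤ ModuleCat.{0} k} (f : X ⟶ M) : Prop :=
  IsRightApproximation (IsIntervalDecomposable k) f ∧ IsRightMinimal f

section Resolutions

variable {C : Type*} [Category C] [Limits.HasZeroMorphisms C]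

/-- `M` admits a resolution `0 ⟶ J_n ⟶ ⋯ ⟶ J_1 ⟶ J_0 ⟶ M ⟶ 0` of length `n` by objects
of `𝒳`: an exact sequence in which every `J_i` lies in `𝒳`.  (The data is encoded by an
`ℕ`-indexed complex which vanishes in degrees `> n` and is exact everywhere.) -/
def HasResolutionOfLength (𝒳 : C → Prop) (n : ℕ) (M : C) : Prop :=
  ∃ (J : ℕ → C) (d : ∀ i, J (i + 1) ⟶ J i) (f : J 0 ⟶ M) (w0 : d 0 ≫ f = 0)
    (w : ∀ i, d (i + 1) ≫ d i = 0),
    (∀ i, i ≤ n → 𝒳 (J i)) ∧ (∀ i, n < i → IsZero (J i)) ∧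
    Epi f ∧ (ShortComplex.mk (d 0) f w0).Exact ∧
    ∀ i, (ShortComplex.mk (d (i + 1)) (d i) (w i)).Exact

end Resolutions

section KanTheta

variable (k : Type) [Field k] {P : Type} [PartialOrder P] (Q : Set P)

/-- The restriction functor along the inclusion `ι : Q ↪ P` of a full subposet
(precomposition with `ι`). -/
noncomputable def resFunctor : (P ⥤ ModuleCat.{0} k) ⥤ (↥Q ⥤ ModuleCat.{0} k) :=
  (CategoryTheory.Functor.whiskeringLeft _ _ _).obj (Subtype.mono_coe (· ∈ Q)).functor

variable (L R : (↥Q ⥤ ModuleCat.{0} k) ⥤ (P ⥤ ModuleCat.{0} k))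
variable (adjL : L ⊣ resFunctor k Q) (adjR : resFunctor k Q ⊣ R)

/-- The canonical morphism `θ_M : Lan(M) ⟶ Ran(M)` corresponding to the identity of `M`
under the adjunction isomorphisms
`Hom(Lan M, Ran M) ≅ Hom(M, Res (Ran M)) ≅ Hom(M, M)`. -/
noncomputable def thetaHom [IsIso adjR.counit] (M : ↥Q ⥤ ModuleCat.{0} k) :
    L.obj M ⟶ R.obj M :=
  (adjL.homEquiv M (R.obj M)).symm ((asIso adjR.counit).inv.app M)

lemma thetaHom_naturality [IsIso adjR.counit] {M N : ↥Q ⥤ ModuleCat.{0} k} (f : M ⟶ N) :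
    L.map f ≫ thetaHom k Q L R adjL adjR N = thetaHom k Q L R adjL adjR M ≫ R.map f := by
  dsimp [thetaHom]
  rw [← Adjunction.homEquiv_naturality_left_symm, ← Adjunction.homEquiv_naturality_right_symm]
  congr 1
  simpa using ((asIso adjR.counit).inv.naturality f)

/-- The functor `Θ`, sending `M` to the image of `θ_M : Lan(M) ⟶ Ran(M)`. -/
noncomputable def Theta [IsIso adjR.counit] :
    (↥Q ⥤ ModuleCat.{0} k) ⥤ (P ⥤ ModuleCat.{0} k) where
  obj M := image (thetaHom k Q L R adjL adjR M)
  map {M N} f := image.map (Arrow.homMk' _ _ (thetaHom_naturality k Q L R adjL adjR f))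
  map_id M := by
    have h : Arrow.homMk' _ _ (thetaHom_naturality k Q L R adjL adjR (𝟙 M)) =
        𝟙 (Arrow.mk (thetaHom k Q L R adjL adjR M)) :=
      Arrow.hom_ext _ _ (by simp) (by simp)
    show image.map (Arrow.homMk' _ _ (thetaHom_naturality k Q L R adjL adjR (𝟙 M))) =
      𝟙 (image (thetaHom k Q L R adjL adjR M))
    rw [h, image.map_id]
    rfl
  map_comp {M N O} f g := by
    have h : Arrow.homMk' _ _ (thetaHom_naturality k Q L R adjL adjR (f ≫ g)) =
        Arrow.homMk' _ _ (thetaHom_naturality k Q L R adjL adjR f) ≫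
          Arrow.homMk' _ _ (thetaHom_naturality k Q L R adjL adjR g) :=
      Arrow.hom_ext _ _ (by simp) (by simp)
    show image.map (Arrow.homMk' _ _ (thetaHom_naturality k Q L R adjL adjR (f ≫ g))) =
      image.map (Arrow.homMk' _ _ (thetaHom_naturality k Q L R adjL adjR f)) ≫
        image.map (Arrow.homMk' _ _ (thetaHom_naturality k Q L R adjL adjR g))
    rw [h, image.map_comp]

end KanTheta

/-!
The unit of `Lan ⊣ Res` splits `Res θ_M` from the left: `η_M ≫ Res θ_M = ε_M⁻¹`, where `ε` is the
(invertible) counit of `Res ⊣ Ran`. Hence `Res θ_M` is epi, and so is the restriction of the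
inclusion `Θ(M) ↪ Ran(M)`; that restriction is also mono because `Res` is a right adjoint. So
`Res Θ(M) ≅ Res Ran(M) ≅ M`, naturally in `M`.
-/

lemma CategoryTheory.Functor.isIso_map_image_ι {C D : Type*} [Category C] [Category D] [Balanced D]
    (G : C ⥤ D) [G.PreservesMonomorphisms] {X Y : C} (f : X ⟶ Y) [HasImage f]
    [Epi (G.map f)] : IsIso (G.map (image.ι f)) := by
  have : Epi (G.map (factorThruImage f) ≫ G.map (image.ι f)) := by
    rwa [← G.map_comp, image.fac]
  have : Epi (G.map (image.ι f)) := epi_of_epi (G.map (factorThruImage f)) _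
  exact isIso_of_mono_of_epi _

section KanTheta

variable (k : Type) [Field k] {P : Type} [PartialOrder P] (Q : Set P)
  (L R : (↥Q ⥤ ModuleCat.{0} k) ⥤ (P ⥤ ModuleCat.{0} k))
  (adjL : L ⊣ resFunctor k Q) (adjR : resFunctor k Q ⊣ R) [IsIso adjR.counit]

lemma unit_comp_map_thetaHom (M : ↥Q ⥤ ModuleCat.{0} k) :
    adjL.unit.app M ≫ (resFunctor k Q).map (thetaHom k Q L R adjL adjR M) =
      inv (adjR.counit.app M) := by
  refine (adjL.homEquiv_unit (f := thetaHom k Q L R adjL adjR M)).symm.trans ?_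
  simp [thetaHom]

instance epi_map_thetaHom (M : ↥Q ⥤ ModuleCat.{0} k) :
    Epi ((resFunctor k Q).map (thetaHom k Q L R adjL adjR M)) := by
  have : Epi (adjL.unit.app M ≫ (resFunctor k Q).map (thetaHom k Q L R adjL adjR M)) := by
    rw [unit_comp_map_thetaHom]; infer_instance
  exact epi_of_epi (adjL.unit.app M) _

noncomputable def Theta.ι : Theta k Q L R adjL adjR ⟶ R where
  app M := image.ι (thetaHom k Q L R adjL adjR M)
  naturality _ _ f := image.map_ι (Arrow.homMk' _ _ (thetaHom_naturality k Q L R adjL adjR f))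

instance isIso_whiskerRight_Theta_ι :
    IsIso (Functor.whiskerRight (Theta.ι k Q L R adjL adjR) (resFunctor k Q)) := by
  have := adjL.isRightAdjoint
  have (M : ↥Q ⥤ ModuleCat.{0} k) :
      IsIso ((Functor.whiskerRight (Theta.ι k Q L R adjL adjR) (resFunctor k Q)).app M) :=
    (resFunctor k Q).isIso_map_image_ι _
  exact NatIso.isIso_of_isIso_app _

end KanTheta

theorem res_comp_Theta_iso_id
    (k : Type) [Field k] (P : Type) [PartialOrder P] (Q : Set P)
    (L R : (↥Q ⥤ ModuleCat.{0} k) ⥤ (P ⥤ ModuleCat.{0} k))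
    (adjL : L ⊣ resFunctor k Q) (adjR : resFunctor k Q ⊣ R)
    [IsIso adjR.counit] :
    Nonempty (Theta k Q L R adjL adjR ⋙ resFunctor k Q ≅ 𝟭 (↥Q ⥤ ModuleCat.{0} k)) :=
  ⟨asIso (Functor.whiskerRight (Theta.ι k Q L R adjL adjR) (resFunctor k Q) ≫ adjR.counit)⟩
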